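/- For n,e ≥ 1, there exists a linear PL(n,e) code if and only if the number |S_{n,e}| has an optimal embedding in ℤ^n, i.e., if and only if there exist a finite abelian group G of order |S_{n,e}| and a group homomorphism φ : ℤ^n → G whose restriction to S_{n,e} is a bijection onto G. -/
import Mathlib


open Set

/-- The Lee (Manhattan) distance between two words in `ℤ^n`. -/
def leeDist {n : ℕ} (v w : Fin n → ℤ) : ℕ := ∑ i, (v i - w i).natAbs

/-- The Lee sphere `S_{n,r}` of radius `r` centered at the origin. -/
def leeSphere (n r : ℕ) : Set (Fin n → ℤ) := {x | leeDist x 0 ≤ r}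

/-- `|S_{n,r}|`, the cardinality of the Lee sphere. -/
noncomputable def sphereCard (n r : ℕ) : ℕ := (leeSphere n r).ncard

/-- `L` is a perfect `e`-error-correcting Lee code `PL(n,e)`: codewords are at pairwise
Lee distance at least `2e+1`, and every word is within Lee distance `e` of exactly
one codeword. -/
def IsPLCode {n : ℕ} (e : ℕ) (L : Set (Fin n → ℤ)) : Prop :=
  (∀ v ∈ L, ∀ w ∈ L, v ≠ w → 2 * e + 1 ≤ leeDist v w) ∧
  ∀ x : Fin n → ℤ, ∃! c, c ∈ L ∧ leeDist x c ≤ e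


lemma leeDist_comm {n : ℕ} (v w : Fin n → ℤ) : leeDist v w = leeDist w v := by
  unfold leeDist; apply Finset.sum_congr rfl; intro i _; omega

lemma leeDist_sub {n : ℕ} (x s : Fin n → ℤ) : leeDist (x - s) 0 = leeDist x s := by
  unfold leeDist; apply Finset.sum_congr rfl; intro i _; simp

lemma leeSphere_finite (n r : ℕ) : (leeSphere n r).Finite := by
  apply Set.Finite.subset (Set.Finite.pi (fun i : Fin n => Set.finite_Icc (-(r:ℤ)) r))
  intro x hx
  simp only [leeSphere, mem_setOf_eq, leeDist] at hx
  intro i _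
  have h1 : (x i - (0:Fin n → ℤ) i).natAbs ≤ ∑ j, (x j - (0:Fin n → ℤ) j).natAbs :=
    Finset.single_le_sum (f := fun j => (x j - (0:Fin n → ℤ) j).natAbs)
      (fun j _ => Nat.zero_le _) (Finset.mem_univ i)
  simp only [Pi.zero_apply, sub_zero] at h1 hx
  have := le_trans h1 hx
  simp only [Set.mem_Icc]
  omega

lemma exists_le_sum {ι : Type*} [DecidableEq ι] (s : Finset ι) (a : ι → ℕ) :
    ∀ t : ℕ, t ≤ ∑ i ∈ s, a i → ∃ b : ι → ℕ, (∀ i, b i ≤ a i) ∧ ∑ i ∈ s, b i = t := by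
  induction s using Finset.induction_on with
  | empty => intro t ht; simp at ht; exact ⟨0, fun i => Nat.zero_le _, by simp [ht]⟩
  | @insert i s hi ih =>
    intro t ht
    rw [Finset.sum_insert hi] at ht
    obtain ⟨b', hb', hs'⟩ := ih (t - min t (a i)) (by omega)
    refine ⟨fun j => if j = i then min t (a i) else b' j, fun j => ?_, ?_⟩
    · by_cases h : j = i
      · subst h; simp only [if_true, eq_self_iff_true]; omega
      · simp only [if_neg h]; exact hb' j
    · rw [Finset.sum_insert hi, if_pos rfl,
        Finset.sum_congr rfl (fun j hj => if_neg (by rintro rfl; exact hi hj)), hs']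
      omega

lemma sign_mul_natAbs_eq (z : ℤ) (b : ℕ) (hb : b ≤ z.natAbs) : (z.sign * b).natAbs = b := by
  rcases Int.lt_trichotomy z 0 with h|h|h
  · rw [Int.sign_eq_neg_one_of_neg h]; simp
  · subst h; simp at hb; simp [hb]
  · rw [Int.sign_eq_one_of_pos h]; simp

lemma exists_mid {n : ℕ} (v w : Fin n → ℤ) (e : ℕ) (h : leeDist v w ≤ 2 * e) :
    ∃ x, leeDist x v ≤ e ∧ leeDist x w ≤ e := by
  set d := leeDist v w with hd
  obtain ⟨b, hb, hsum⟩ := exists_le_sum Finset.univ (fun i => (v i - w i).natAbs)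
    (min e d) (by rw [hd]; exact min_le_right _ _)
  refine ⟨fun i => v i - (v i - w i).sign * b i, ?_, ?_⟩
  · have : leeDist (fun i => v i - (v i - w i).sign * b i) v = min e d := by
      unfold leeDist
      rw [← hsum]
      apply Finset.sum_congr rfl
      intro i _
      have : v i - (v i - w i).sign * b i - v i = -((v i - w i).sign * b i) := by ring
      rw [this, Int.natAbs_neg, sign_mul_natAbs_eq _ _ (hb i)]
    omega
  · have : leeDist (fun i => v i - (v i - w i).sign * b i) w = d - min e d := by
      have key : ∀ i, (v i - (v i - w i).sign * b i - w i).natAbs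
          = (v i - w i).natAbs - b i := by
        intro i
        set z := v i - w i with hz
        have h1 : v i - z.sign * b i - w i = z.sign * ((z.natAbs : ℤ) - b i) := by
          rw [mul_sub]
          rw [Int.sign_mul_natAbs]
          ring
        rw [h1]
        have h2 : (z.natAbs : ℤ) - b i = ((z.natAbs - b i : ℕ) : ℤ) := by
          have := hb i; omega
        rw [h2, sign_mul_natAbs_eq _ _ (by omega)]
      unfold leeDist
      rw [Finset.sum_congr rfl (fun i _ => key i)]
      have h3 : (∑ i, ((v i - w i).natAbs - b i)) + ∑ i, b i = ∑ i, (v i - w i).natAbs := by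
        rw [← Finset.sum_add_distrib]
        apply Finset.sum_congr rfl
        intro i _
        have := hb i; omega
      rw [hsum] at h3
      have : d = ∑ i, (v i - w i).natAbs := hd
      omega
    omega

lemma leeDist_self_sub {n : ℕ} (x s : Fin n → ℤ) : leeDist x (x - s) = leeDist s 0 := by
  unfold leeDist; apply Finset.sum_congr rfl; intro i _; simp

theorem linear_PL_iff_optimal_embedding (n e : ℕ) (hn : 1 ≤ n) (he : 1 ≤ e) :
    (∃ L : AddSubgroup (Fin n → ℤ), IsPLCode e (L : Set (Fin n → ℤ))) ↔
      ∃ (G : Type) (_ : AddCommGroup G) (_ : Fintype G) (φ : (Fin n → ℤ) →+ G),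
        Nat.card G = sphereCard n e ∧ Set.BijOn φ (leeSphere n e) Set.univ := by
  constructor
  · rintro ⟨L, hmin, hex⟩
    set φ := QuotientAddGroup.mk' L with hφdef
    have hinj : InjOn φ (leeSphere n e) := by
      intro s1 h1 s2 h2 heq
      have hmem : s1 - s2 ∈ L := by
        rw [← QuotientAddGroup.ker_mk' L, AddMonoidHom.mem_ker, map_sub, sub_eq_zero]
        exact heq
      obtain ⟨c, -, hu⟩ := hex s1
      have h0 : (0 : Fin n → ℤ) = c := hu 0 ⟨L.zero_mem, by
        have hx : leeDist s1 0 ≤ e := h1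
        exact hx⟩
      have h12 : s1 - s2 = c := hu (s1 - s2) ⟨hmem, by
        rw [leeDist_self_sub]; exact h2⟩
      have : s1 - s2 = 0 := h12.trans h0.symm
      exact sub_eq_zero.mp this
    have hsurj : SurjOn φ (leeSphere n e) univ := by
      rintro g -
      obtain ⟨x, rfl⟩ := QuotientAddGroup.mk'_surjective L g
      obtain ⟨c, ⟨hcL, hcd⟩, -⟩ := hex x
      refine ⟨x - c, ?_, ?_⟩
      · show leeDist (x - c) 0 ≤ e
        rw [leeDist_sub]; exact hcd
      · show φ (x - c) = φ x
        have hc0 : φ c = 0 := by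
          rw [hφdef, ← AddMonoidHom.mem_ker, QuotientAddGroup.ker_mk']; exact hcL
        rw [map_sub, hc0, sub_zero]
    have hbij : BijOn φ (leeSphere n e) univ := ⟨fun _ _ => mem_univ _, hinj, hsurj⟩
    have hfinU : (univ : Set ((Fin n → ℤ) ⧸ L)).Finite := by
      rw [← hbij.image_eq]
      exact (leeSphere_finite n e).image φ
    have hfin : Finite ((Fin n → ℤ) ⧸ L) := Set.finite_univ_iff.mp hfinU
    refine ⟨(Fin n → ℤ) ⧸ L, inferInstance, @Fintype.ofFinite _ hfin, φ, ?_, hbij⟩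
    calc Nat.card ((Fin n → ℤ) ⧸ L) = (univ : Set ((Fin n → ℤ) ⧸ L)).ncard :=
          (ncard_univ _).symm
      _ = (φ '' leeSphere n e).ncard := by rw [hbij.image_eq]
      _ = (leeSphere n e).ncard := ncard_image_of_injOn hinj
      _ = sphereCard n e := rfl
  · rintro ⟨G, _, _, φ, hcard, hbij⟩
    refine ⟨φ.ker, ?_, ?_⟩
    · intro v hv w hw hne
      rw [SetLike.mem_coe, AddMonoidHom.mem_ker] at hv hw
      by_contra hlt
      push_neg at hlt
      obtain ⟨x, hxv, hxw⟩ := exists_mid v w e (by omega)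
      have h1 : x - v ∈ leeSphere n e := by
        show leeDist (x - v) 0 ≤ e; rw [leeDist_sub]; exact hxv
      have h2 : x - w ∈ leeSphere n e := by
        show leeDist (x - w) 0 ≤ e; rw [leeDist_sub]; exact hxw
      have heq : φ (x - v) = φ (x - w) := by
        rw [map_sub, map_sub, hv, hw]
      have := hbij.injOn h1 h2 heq
      exact hne (sub_right_inj.mp this)
    · intro x
      obtain ⟨s, hs, hφs⟩ := hbij.surjOn (mem_univ (φ x))
      refine ⟨x - s, ⟨?_, ?_⟩, ?_⟩
      · show x - s ∈ φ.ker
        rw [AddMonoidHom.mem_ker, map_sub, hφs, sub_self]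
      · rw [leeDist_self_sub]; exact hs
      · rintro c ⟨hcL, hcd⟩
        rw [SetLike.mem_coe, AddMonoidHom.mem_ker] at hcL
        have h1 : x - c ∈ leeSphere n e := by
          show leeDist (x - c) 0 ≤ e; rw [leeDist_sub]; exact hcd
        have h2 : φ (x - c) = φ s := by
          rw [map_sub, hcL, sub_zero, hφs]
        have h3 : x - c = s := hbij.injOn h1 hs h2
        rw [← h3, sub_sub_cancel]
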